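/- arXiv:1310.7770 — 5 statements merged into one kernel-verified Lean document; each statement's English description precedes it below -/
import Mathlib

section
/- If $\mu\in\mathcal{M}_1^{s}(\mathcal{T}^2)$ is a probability measure with equal marginals whose support is exactly the edge set of a simple cycle $\gamma$, then $\mu = \mu_\gamma$, the uniform measure on the edges of $\gamma$. -/
/-- Probability measure on `T²` with equal marginals. -/
def memM1s {T : Type*} [Fintype T] (μ : T × T → ℝ) : Prop :=
  (∀ p, 0 ≤ μ p) ∧ (∑ p : T × T, μ p = 1) ∧
    ∀ i : T, ∑ j, μ (i, j) = ∑ j, μ (j, i)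

/-- The uniform measure on the edges of a cycle `γ` of length `l + 1`,
given by the vertices `γ 0, γ 1, …, γ l` (addition in `Fin (l+1)` is cyclic). -/
noncomputable def cycleMeasure {T : Type*} [Fintype T] [DecidableEq T] {l : ℕ}
    (γ : Fin (l + 1) → T) : T × T → ℝ :=
  fun p => if ∃ m, p = (γ m, γ (m + 1)) then ((l : ℝ) + 1)⁻¹ else 0

/-!
Every vertex `γ (m + 1)` of the cycle has exactly one outgoing edge carrying mass, namely
`(γ (m + 1), γ (m + 2))`, and exactly one incoming one, `(γ m, γ (m + 1))`. Equality of the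
marginals at `γ (m + 1)` therefore forces consecutive edges to carry equal mass, so the mass is
constant along the cycle, and total mass one makes it `1 / (l + 1)` on each of the `l + 1` edges.
-/

lemma Fin.apply_eq_apply_zero_of_apply_add_one_eq {α : Type*} {n : ℕ} {f : Fin (n + 1) → α}
    (hf : ∀ m, f (m + 1) = f m) (m : Fin (n + 1)) : f m = f 0 := by
  induction m using Fin.induction with
  | zero => rfl
  | succ i ih => rw [← Fin.coeSucc_eq_succ, hf, ih]

section CycleSupport

variable {T α : Type*} [Fintype T] [AddCommMonoid α] {l : ℕ} {γ : Fin (l + 1) → T}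
  {μ : T × T → α}

lemma sum_out_eq_of_vanishes_off_cycle (hinj : Function.Injective γ)
    (hμ : ∀ p, (¬ ∃ m, p = (γ m, γ (m + 1))) → μ p = 0) (m : Fin (l + 1)) :
    ∑ j, μ (γ m, j) = μ (γ m, γ (m + 1)) := by
  refine Fintype.sum_eq_single _ fun j hj => hμ _ ?_
  rintro ⟨k, hk⟩
  obtain rfl : m = k := hinj (congrArg Prod.fst hk)
  exact hj (congrArg Prod.snd hk)

lemma sum_in_eq_of_vanishes_off_cycle (hinj : Function.Injective γ)
    (hμ : ∀ p, (¬ ∃ m, p = (γ m, γ (m + 1))) → μ p = 0) (m : Fin (l + 1)) :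
    ∑ j, μ (j, γ (m + 1)) = μ (γ m, γ (m + 1)) := by
  refine Fintype.sum_eq_single _ fun j hj => hμ _ ?_
  rintro ⟨k, hk⟩
  obtain rfl : m = k := add_right_cancel (hinj (congrArg Prod.snd hk))
  exact hj (congrArg Prod.fst hk)

lemma sum_eq_sum_cycle_edges_of_vanishes_off_cycle (hinj : Function.Injective γ)
    (hμ : ∀ p, (¬ ∃ m, p = (γ m, γ (m + 1))) → μ p = 0) :
    ∑ p, μ p = ∑ m, μ (γ m, γ (m + 1)) :=
  (Fintype.sum_of_injective (fun m => (γ m, γ (m + 1)))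
    (fun _ _ h => hinj (congrArg Prod.fst h)) _ μ
    (fun p hp => hμ p fun ⟨m, hm⟩ => hp ⟨m, hm.symm⟩) fun _ => rfl).symm

end CycleSupport

/-- If the support of a probability measure with equal marginals is exactly the edge
set of a simple cycle `γ`, then the measure is the uniform measure on the edges of `γ`. -/
theorem stmt4 {T : Type*} [Fintype T] [DecidableEq T]
    (μ : T × T → ℝ) (h : memM1s μ) {l : ℕ}
    (γ : Fin (l + 1) → T) (hinj : Function.Injective γ)
    (hsupp : ∀ p : T × T, 0 < μ p ↔ ∃ m, p = (γ m, γ (m + 1))) :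
    μ = cycleMeasure γ := by
  obtain ⟨hnonneg, hmass, hbalance⟩ := h
  have hμ : ∀ p, (¬ ∃ m, p = (γ m, γ (m + 1))) → μ p = 0 := fun p hp =>
    le_antisymm (not_lt.1 (mt (hsupp p).1 hp)) (hnonneg p)
  have hconst : ∀ m, μ (γ m, γ (m + 1)) = μ (γ 0, γ (0 + 1)) :=
    Fin.apply_eq_apply_zero_of_apply_add_one_eq (f := fun m => μ (γ m, γ (m + 1))) fun m => by
      rw [← sum_out_eq_of_vanishes_off_cycle hinj hμ, hbalance,
        sum_in_eq_of_vanishes_off_cycle hinj hμ]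
  have hedge : μ (γ 0, γ (0 + 1)) = ((l : ℝ) + 1)⁻¹ := by
    rw [sum_eq_sum_cycle_edges_of_vanishes_off_cycle hinj hμ,
      Finset.sum_congr rfl fun m _ => hconst m, Finset.sum_const, Finset.card_univ,
      Fintype.card_fin, nsmul_eq_mul] at hmass
    push_cast at hmass
    exact eq_inv_of_mul_eq_one_right hmass
  funext p
  unfold cycleMeasure
  split_ifs with hp
  · obtain ⟨m, rfl⟩ := hp
    rw [hconst, hedge]
  · exact hμ p hp
end

section
/- The set of extreme points of the convex set $\mathcal{M}_1^{s}(\mathcal{T}^2)$ of probability measures on $\mathcal{T}^2$ with equal marginals is exactly $\{\mu_\gamma : \gamma \text{ a simple cycle on } \mathcal{T}\}$, where $\mu_\gamma$ is the uniform measure on the edges of $\gamma$. -/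
/-
An extreme point `μ` has a simple cycle `γ` in its support: following edges of positive
mass never gets stuck, because inflow equals outflow, so it eventually closes up. The
constraints other than positivity are affine, so for `t > 1` close to `1` the point
`μ_γ + t (μ - μ_γ)` is again a probability measure with equal marginals; `μ` lies on the open
segment from `μ_γ` to it, and extremality forces `μ = μ_γ`. Conversely, a measure
with equal marginals supported on the edges of a simple cycle carries the same mass on
consecutive edges, hence is `μ_γ`; since every decomposition of `μ_γ` as a convex combination
involves only measures supported on its edges, `μ_γ` is extreme.
-/

open Function Finset

theorem Fin.apply_eq_apply_zero_of_forall_apply_add_one {α : Type*} {n : ℕ}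
    {f : Fin (n + 1) → α} (h : ∀ m, f (m + 1) = f m) (m : Fin (n + 1)) : f m = f 0 := by
  induction m using Fin.induction with
  | zero => rfl
  | succ i ih => rw [← Fin.coeSucc_eq_succ, h, ih]

theorem Function.nonempty_periodicPts {α : Type*} [Finite α] [Nonempty α] (f : α → α) :
    (periodicPts f).Nonempty := by
  obtain ⟨x⟩ := ‹Nonempty α›
  obtain ⟨a, b, hne, hab⟩ := Finite.exists_ne_map_eq_of_infinite fun n => f^[n] x
  wlog hlt : a < b generalizing a b
  · exact this b a hne.symm hab.symm (lt_of_le_of_ne (not_lt.1 hlt) hne.symm)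
  refine ⟨f^[a] x, mk_mem_periodicPts (Nat.sub_pos_of_lt hlt) ?_⟩
  change f^[b - a] (f^[a] x) = f^[a] x
  rw [← iterate_add_apply, Nat.sub_add_cancel hlt.le, hab]

theorem exists_injective_cycle_of_forall_exists_rel {α : Type*} [Finite α] [Nonempty α]
    {r : α → α → Prop} (h : ∀ a, ∃ b, r a b) :
    ∃ l : ℕ, ∃ γ : Fin (l + 1) → α, Injective γ ∧ ∀ m, r (γ m) (γ (m + 1)) := by
  choose f hf using h
  obtain ⟨x, hx⟩ := nonempty_periodicPts f
  obtain ⟨l, hl⟩ := Nat.exists_eq_add_one_of_ne_zero (minimalPeriod_pos_of_mem_periodicPts hx).ne'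
  refine ⟨l, fun m => f^[m] x, fun m m' h => Fin.ext ?_, fun m => ?_⟩
  · have hlt (k : Fin (l + 1)) : (k : ℕ) ∈ Set.Iio (minimalPeriod f x) := by
      rw [Set.mem_Iio, hl]; exact k.isLt
    exact iterate_injOn_Iio_minimalPeriod (hlt m) (hlt m') h
  · have hmod := iterate_mod_minimalPeriod_eq (f := f) (x := x) (n := m + 1)
    rw [hl] at hmod
    have : f^[(m + 1 : Fin (l + 1))] x = f (f^[m] x) := by
      rw [Fin.val_add, Fin.val_one', Nat.add_mod_mod, hmod, iterate_succ_apply']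
    simpa only [this] using hf _

theorem eq_of_mem_extremePoints_of_lineMap_mem {𝕜 E : Type*} [Field 𝕜] [LinearOrder 𝕜]
    [IsStrictOrderedRing 𝕜] [AddCommGroup E] [Module 𝕜 E] {A : Set E} {x y : E}
    (hx : x ∈ A.extremePoints 𝕜) (hy : y ∈ A) {t : 𝕜} (ht : 1 < t)
    (h : AffineMap.lineMap y x t ∈ A) : x = y := by
  have ht0 : t ≠ 0 := (zero_lt_one.trans ht).ne'
  have hseg : x ∈ openSegment 𝕜 y (AffineMap.lineMap y x t) := by
    refine ⟨1 - t⁻¹, t⁻¹, sub_pos.2 (inv_lt_one_of_one_lt₀ ht), by positivity, by ring, ?_⟩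
    rw [AffineMap.lineMap_apply_module]
    match_scalars
    · field_simp
      ring
    · field_simp
  exact (hx.2 hy h hseg).symm

theorem support_subset_of_mem_openSegment {ι : Type*} {x y z : ι → ℝ} (hx : ∀ p, 0 ≤ x p)
    (hy : ∀ p, 0 ≤ y p) (h : z ∈ openSegment ℝ x y) : support x ⊆ support z := by
  obtain ⟨a, b, ha, hb, -, rfl⟩ := h
  intro p hp hz
  simp only [Pi.add_apply, Pi.smul_apply, smul_eq_mul] at hz
  have := (add_eq_zero_iff_of_nonneg (mul_nonneg ha.le (hx p)) (mul_nonneg hb.le (hy p))).1 hz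
  exact hp ((mul_eq_zero.1 this.1).resolve_left ha.ne')

section CycleEdges

variable {T : Type*} {l : ℕ}

def cycleEdge (γ : Fin (l + 1) → T) (m : Fin (l + 1)) : T × T := (γ m, γ (m + 1))

variable {γ : Fin (l + 1) → T}

theorem cycleEdge_injective (hγ : Injective γ) : Injective (cycleEdge γ) :=
  fun _ _ h => hγ (congrArg Prod.fst h)

variable {M : Type*} [AddCommMonoid M] {x : T × T → M}

theorem apply_eq_zero_of_support_subset (hx : support x ⊆ Set.range (cycleEdge γ)) {p : T × T}
    (hp : p ∉ Set.range (cycleEdge γ)) : x p = 0 :=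
  notMem_support.1 fun h => hp (hx h)

variable [Fintype T]

theorem sum_eq_sum_cycleEdge (hγ : Injective γ) (hx : support x ⊆ Set.range (cycleEdge γ)) :
    ∑ p, x p = ∑ m, x (cycleEdge γ m) :=
  (Fintype.sum_of_injective _ (cycleEdge_injective hγ) _ x
    (fun _ hp => apply_eq_zero_of_support_subset hx hp) fun _ => rfl).symm

theorem sum_out_cycle_vertex (hγ : Injective γ) (hx : support x ⊆ Set.range (cycleEdge γ))
    (m : Fin (l + 1)) : ∑ j, x (γ m, j) = x (cycleEdge γ m) := by
  refine Fintype.sum_eq_single _ fun j hj => apply_eq_zero_of_support_subset hx ?_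
  rintro ⟨m', hm'⟩
  obtain rfl : m' = m := hγ (congrArg Prod.fst hm')
  exact hj (congrArg Prod.snd hm').symm

theorem sum_in_cycle_vertex (hγ : Injective γ) (hx : support x ⊆ Set.range (cycleEdge γ))
    (m : Fin (l + 1)) : ∑ j, x (j, γ (m + 1)) = x (cycleEdge γ m) := by
  refine Fintype.sum_eq_single _ fun j hj => apply_eq_zero_of_support_subset hx ?_
  rintro ⟨m', hm'⟩
  obtain rfl : m' = m := add_right_cancel (hγ (congrArg Prod.snd hm'))
  exact hj (congrArg Prod.fst hm').symm

theorem marginal_sums_eq_zero_of_notMem_range (hx : support x ⊆ Set.range (cycleEdge γ)) {i : T}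
    (hi : i ∉ Set.range γ) : ∑ j, x (i, j) = 0 ∧ ∑ j, x (j, i) = 0 :=
  ⟨Fintype.sum_eq_zero _ fun _ => apply_eq_zero_of_support_subset hx
      fun ⟨m, hm⟩ => hi ⟨m, congrArg Prod.fst hm⟩,
    Fintype.sum_eq_zero _ fun _ => apply_eq_zero_of_support_subset hx
      fun ⟨m, hm⟩ => hi ⟨m + 1, congrArg Prod.snd hm⟩⟩

theorem apply_cycleEdge_eq_of_marginals (hγ : Injective γ)
    (hx : support x ⊆ Set.range (cycleEdge γ)) (hmarg : ∀ i, ∑ j, x (i, j) = ∑ j, x (j, i))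
    (m : Fin (l + 1)) : x (cycleEdge γ m) = x (cycleEdge γ 0) :=
  Fin.apply_eq_apply_zero_of_forall_apply_add_one (f := fun m => x (cycleEdge γ m)) (fun m => by
    rw [← sum_out_cycle_vertex hγ hx, hmarg, sum_in_cycle_vertex hγ hx]) m

end CycleEdges

section CycleMeasure

variable {T : Type*} [Fintype T] [DecidableEq T] {l : ℕ} {γ : Fin (l + 1) → T}

theorem cycleMeasure_cycleEdge (m : Fin (l + 1)) :
    cycleMeasure γ (cycleEdge γ m) = ((l : ℝ) + 1)⁻¹ :=
  if_pos ⟨m, rfl⟩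

theorem support_cycleMeasure_subset : support (cycleMeasure γ) ⊆ Set.range (cycleEdge γ) :=
  fun _ hp => by_contra fun h => hp (if_neg fun ⟨m, hm⟩ => h ⟨m, hm.symm⟩)

theorem cycleMeasure_memM1s (hγ : Injective γ) : memM1s (cycleMeasure γ) := by
  refine ⟨fun p => ?_, ?_, fun i => ?_⟩
  · unfold cycleMeasure
    split_ifs <;> positivity
  · simp only [sum_eq_sum_cycleEdge hγ support_cycleMeasure_subset, cycleMeasure_cycleEdge,
      sum_const, card_univ, Fintype.card_fin, nsmul_eq_mul]
    push_cast
    exact mul_inv_cancel₀ (by positivity)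
  · by_cases hi : i ∈ Set.range γ
    · obtain ⟨m, rfl⟩ : ∃ m, γ (m + 1) = i := by
        obtain ⟨k, rfl⟩ := hi
        exact ⟨k - 1, by rw [sub_add_cancel]⟩
      rw [sum_out_cycle_vertex hγ support_cycleMeasure_subset,
        sum_in_cycle_vertex hγ support_cycleMeasure_subset, cycleMeasure_cycleEdge,
        cycleMeasure_cycleEdge]
    · obtain ⟨hout, hin⟩ := marginal_sums_eq_zero_of_notMem_range support_cycleMeasure_subset hi
      rw [hout, hin]

theorem eq_cycleMeasure_of_support_subset (hγ : Injective γ) {x : T × T → ℝ} (hx : memM1s x)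
    (hsupp : support x ⊆ Set.range (cycleEdge γ)) : x = cycleMeasure γ := by
  obtain ⟨-, hsum, hmarg⟩ := hx
  have hconst := apply_cycleEdge_eq_of_marginals hγ hsupp hmarg
  have hval : x (cycleEdge γ 0) = ((l : ℝ) + 1)⁻¹ := by
    rw [sum_eq_sum_cycleEdge hγ hsupp, Fintype.sum_congr _ _ hconst] at hsum
    simp only [sum_const, card_univ, Fintype.card_fin, nsmul_eq_mul] at hsum
    push_cast at hsum
    exact eq_inv_of_mul_eq_one_right hsum
  funext p
  by_cases hp : p ∈ Set.range (cycleEdge γ)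
  · obtain ⟨m, rfl⟩ := hp
    rw [cycleMeasure_cycleEdge, hconst, hval]
  · rw [apply_eq_zero_of_support_subset hsupp hp,
      apply_eq_zero_of_support_subset support_cycleMeasure_subset hp]

end CycleMeasure

section Marginals

variable {T : Type*} [Fintype T] {μ ν : T × T → ℝ}

theorem memM1s.lineMap (hν : memM1s ν) (hμ : memM1s μ) {t : ℝ}
    (hnn : ∀ p, 0 ≤ AffineMap.lineMap ν μ t p) : memM1s (AffineMap.lineMap ν μ t) := by
  obtain ⟨-, hν1, hνm⟩ := hν
  obtain ⟨-, hμ1, hμm⟩ := hμ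
  refine ⟨hnn, ?_, fun i => ?_⟩ <;>
    simp only [AffineMap.lineMap_apply_module, Pi.add_apply, Pi.smul_apply, smul_eq_mul,
      sum_add_distrib, ← mul_sum]
  · rw [hν1, hμ1]
    ring
  · rw [hνm, hμm]

theorem memM1s.exists_pos (hμ : memM1s μ) : ∃ p, 0 < μ p := by
  obtain ⟨p, -, hp⟩ := exists_lt_of_sum_lt (s := univ) (f := 0) (g := μ) (by simp [hμ.2.1])
  exact ⟨p, hp⟩

theorem memM1s.exists_pos_of_pos (hμ : memM1s μ) {i j : T} (h : 0 < μ (i, j)) :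
    ∃ k, 0 < μ (j, k) := by
  have hin : 0 < ∑ k, μ (k, j) :=
    h.trans_le (single_le_sum (f := fun k => μ (k, j)) (fun k _ => hμ.1 _) (mem_univ i))
  rw [← hμ.2.2] at hin
  obtain ⟨k, -, hk⟩ := exists_lt_of_sum_lt (s := univ) (f := 0) (g := fun k => μ (j, k))
    (by simpa using hin)
  exact ⟨k, hk⟩

theorem memM1s.exists_injective_cycle_pos (hμ : memM1s μ) :
    ∃ l : ℕ, ∃ γ : Fin (l + 1) → T, Injective γ ∧ ∀ m, 0 < μ (cycleEdge γ m) := by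
  obtain ⟨⟨i, j⟩, hij⟩ := hμ.exists_pos
  have : Nonempty {i // ∃ j, 0 < μ (i, j)} := ⟨⟨i, j, hij⟩⟩
  obtain ⟨l, γ, hγ, hpos⟩ := exists_injective_cycle_of_forall_exists_rel
    (r := fun a b : {i // ∃ j, 0 < μ (i, j)} => 0 < μ (a, b)) fun a => by
      obtain ⟨j, hj⟩ := a.2
      exact ⟨⟨j, hμ.exists_pos_of_pos hj⟩, hj⟩
  exact ⟨l, Subtype.val ∘ γ, Subtype.val_injective.comp hγ, hpos⟩

theorem exists_lineMap_cycleMeasure_nonneg [DecidableEq T] {l : ℕ} {γ : Fin (l + 1) → T}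
    (hμ : ∀ p, 0 ≤ μ p) (hpos : ∀ m, 0 < μ (cycleEdge γ m)) :
    ∃ t : ℝ, 1 < t ∧ ∀ p, 0 ≤ AffineMap.lineMap (cycleMeasure γ) μ t p := by
  obtain ⟨m₀, hm₀⟩ := Finite.exists_min fun m => μ (cycleEdge γ m)
  set c := μ (cycleEdge γ m₀)
  have hc : 0 < c := hpos m₀
  have hL : (0 : ℝ) < l + 1 := by positivity
  refine ⟨1 + (l + 1) * c, by simp only [lt_add_iff_pos_right]; positivity, fun p => ?_⟩
  simp only [AffineMap.lineMap_apply_module, Pi.add_apply, Pi.smul_apply, smul_eq_mul]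
  by_cases hp : p ∈ Set.range (cycleEdge γ)
  · obtain ⟨m, rfl⟩ := hp
    have hcoef : (1 - (1 + (l + 1) * c)) * ((l : ℝ) + 1)⁻¹ = -c := by
      field_simp
      ring
    rw [cycleMeasure_cycleEdge, hcoef]
    nlinarith [hm₀ m, mul_nonneg (mul_nonneg hL.le hc.le) (hμ (cycleEdge γ m))]
  · rw [apply_eq_zero_of_support_subset support_cycleMeasure_subset hp, mul_zero, zero_add]
    exact mul_nonneg (by positivity) (hμ p)

end Marginals

/-- The extreme points of the convex set of probability measures on `T²` with equal
marginals are exactly the uniform measures on the edges of simple cycles. -/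
theorem stmt5 {T : Type*} [Fintype T] [DecidableEq T] :
    Set.extremePoints ℝ {μ : T × T → ℝ | memM1s μ} =
      {μ : T × T → ℝ | ∃ l : ℕ, ∃ γ : Fin (l + 1) → T,
        Function.Injective γ ∧ μ = cycleMeasure γ} := by
  ext μ
  constructor
  · intro hμ
    obtain ⟨l, γ, hγ, hpos⟩ := memM1s.exists_injective_cycle_pos hμ.1
    obtain ⟨t, ht, hnn⟩ := exists_lineMap_cycleMeasure_nonneg hμ.1.1 hpos
    have hγμ := cycleMeasure_memM1s hγ
    exact ⟨l, γ, hγ, eq_of_mem_extremePoints_of_lineMap_mem hμ hγμ ht (hγμ.lineMap hμ.1 hnn)⟩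
  · rintro ⟨l, γ, hγ, rfl⟩
    refine mem_extremePoints_iff_left.2 ⟨cycleMeasure_memM1s hγ, fun x hx y hy hseg => ?_⟩
    exact eq_cycleMeasure_of_support_subset hγ hx
      ((support_subset_of_mem_openSegment hx.1 hy.1 hseg).trans support_cycleMeasure_subset)
end

section
/- If $\mu\in\mathcal{M}_1^{s}(\mathcal{T}^2)$ is a probability measure with equal marginals that is not of the form $\mu_\gamma$ for a simple cycle $\gamma$, then $\mu$ is not an extreme point of $\mathcal{M}_1^{s}(\mathcal{T}^2)$: there exist distinct $\mu_1,\mu_2\in\mathcal{M}_1^{s}(\mathcal{T}^2)$ and $a\in(0,1)$ with $\mu=a\mu_1+(1-a)\mu_2$. -/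
namespace Function

variable {α : Type*} [Finite α] [Nonempty α]

theorem periodicPts_nonempty_of_finite (f : α → α) : (periodicPts f).Nonempty := by
  obtain ⟨m, n, hmn, heq⟩ := Finite.exists_ne_map_eq_of_infinite (f^[·] (Classical.arbitrary α))
  wlog hlt : m < n generalizing m n
  · exact this n m hmn.symm heq.symm (by omega)
  refine ⟨f^[m] (Classical.arbitrary α), mk_mem_periodicPts (Nat.sub_pos_of_lt hlt) ?_⟩
  rw [IsPeriodicPt, IsFixedPt, ← iterate_add_apply, Nat.sub_add_cancel hlt.le]
  exact heq.symm

theorem exists_injective_cycle (f : α → α) :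
    ∃ (l : ℕ) (γ : Fin (l + 1) → α), Injective γ ∧ ∀ m, γ (m + 1) = f (γ m) := by
  obtain ⟨x, hx⟩ := periodicPts_nonempty_of_finite f
  obtain ⟨l, hl⟩ := Nat.exists_eq_add_one_of_ne_zero (minimalPeriod_pos_of_mem_periodicPts hx).ne'
  refine ⟨l, fun m => f^[m] x, fun m m' h => Fin.ext ?_, fun m => ?_⟩
  · exact iterate_injOn_Iio_minimalPeriod (by simp [hl, m.is_lt]) (by simp [hl, m'.is_lt]) h
  · rw [← iterate_succ_apply' f, ← iterate_mod_minimalPeriod_eq, hl, Nat.succ_eq_add_one,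
      ← Nat.add_mod_mod, ← Fin.val_one', ← Fin.val_add]

theorem exists_injective_cycle_of_forall_exists_rel (R : α → α → Prop) (h : ∀ a, ∃ b, R a b) :
    ∃ (l : ℕ) (γ : Fin (l + 1) → α), Injective γ ∧ ∀ m, R (γ m) (γ (m + 1)) := by
  choose f hf using h
  obtain ⟨l, γ, hγ, hcycle⟩ := exists_injective_cycle f
  exact ⟨l, γ, hγ, fun m => hcycle m ▸ hf (γ m)⟩

end Function

theorem Finite.exists_mem_Ioo_mul_le {ι : Type*} [Finite ι] {μ ν : ι → ℝ} (hμ : ∀ i, 0 ≤ μ i)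
    (hsupp : ∀ i, ν i ≠ 0 → 0 < μ i) : ∃ b ∈ Set.Ioo (0 : ℝ) 1, ∀ i, b * ν i ≤ μ i := by
  have hsmall : ∀ i, ∀ᶠ b in nhdsWithin (0 : ℝ) (Set.Ioi 0), b * ν i ≤ μ i := by
    intro i
    by_cases hν : ν i = 0
    · simp [hν, hμ i]
    have hlim : Filter.Tendsto (fun b : ℝ => b * ν i) (nhdsWithin 0 (Set.Ioi 0)) (nhds 0) :=
      (by simpa using (continuous_mul_const (ν i)).tendsto 0 : Filter.Tendsto _ _ _).mono_left
        nhdsWithin_le_nhds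
    exact (hlim.eventually (gt_mem_nhds (hsupp i hν))).mono fun _ => le_of_lt
  have hlt1 : ∀ᶠ b in nhdsWithin (0 : ℝ) (Set.Ioi 0), b < 1 :=
    nhdsWithin_le_nhds (gt_mem_nhds zero_lt_one)
  obtain ⟨b, hb, hlt1, hle⟩ :=
    (eventually_mem_nhdsWithin.and (hlt1.and (Filter.eventually_all.2 hsmall))).exists
  exact ⟨b, ⟨hb, hlt1⟩, hle⟩

section

variable {T : Type*} [Fintype T]

namespace memM1s

variable {μ ν : T × T → ℝ}

theorem exists_pos_s6 (hμ : memM1s μ) : ∃ p, 0 < μ p := by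
  by_contra! h
  have : ∑ p, μ p = 0 := Finset.sum_eq_zero fun p _ => le_antisymm (h p) (hμ.1 p)
  linarith [hμ.2.1]

theorem exists_pos_of_pos_s6 (hμ : memM1s μ) {i j : T} (hij : 0 < μ (i, j)) : ∃ k, 0 < μ (j, k) := by
  by_contra! h
  have hin : 0 < ∑ k, μ (k, j) :=
    hij.trans_le (Finset.single_le_sum (f := fun k => μ (k, j)) (fun k _ => hμ.1 _)
      (Finset.mem_univ i))
  linarith [hμ.2.2 j, Finset.sum_nonpos fun k (_ : k ∈ Finset.univ) => h k]

theorem exists_injective_cycle_pos_s6 (hμ : memM1s μ) :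
    ∃ (l : ℕ) (γ : Fin (l + 1) → T), Function.Injective γ ∧
      ∀ m, 0 < μ (γ m, γ (m + 1)) := by
  let V := {i : T // ∃ j, 0 < μ (i, j)}
  obtain ⟨⟨i, j⟩, hij⟩ := hμ.exists_pos_s6
  have : Nonempty V := ⟨⟨i, j, hij⟩⟩
  obtain ⟨l, γ, hγ, hpos⟩ := Function.exists_injective_cycle_of_forall_exists_rel
    (fun a b : V => 0 < μ (a, b)) fun ⟨a, b, hab⟩ =>
      ⟨⟨b, hμ.exists_pos_of_pos_s6 hab⟩, hab⟩
  exact ⟨l, Subtype.val ∘ γ, Subtype.val_injective.comp hγ, hpos⟩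

theorem smul_add_smul {s t : ℝ} (hμ : memM1s μ) (hν : memM1s ν) (hst : s + t = 1)
    (hnonneg : ∀ p, 0 ≤ s * μ p + t * ν p) : memM1s (s • μ + t • ν) := by
  refine ⟨hnonneg, ?_, fun i => ?_⟩
  · simp [Finset.sum_add_distrib, ← Finset.mul_sum, hμ.2.1, hν.2.1, hst]
  · simp [Finset.sum_add_distrib, ← Finset.mul_sum, hμ.2.2 i, hν.2.2 i]

theorem exists_convex_decomposition_of_smul_le (hμ : memM1s μ) (hν : memM1s ν) (hne : μ ≠ ν)
    {b : ℝ} (hb : b ∈ Set.Ioo (0 : ℝ) 1) (hle : ∀ p, b * ν p ≤ μ p) :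
    ∃ μ₁ μ₂ : T × T → ℝ, memM1s μ₁ ∧ memM1s μ₂ ∧ μ₁ ≠ μ₂ ∧
      ∃ a ∈ Set.Ioo (0 : ℝ) 1, μ = a • μ₁ + (1 - a) • μ₂ := by
  have hb1 : 1 - b ≠ 0 := (sub_pos.2 hb.2).ne'
  set μ₁ := (1 - b)⁻¹ • μ + (-(b / (1 - b))) • ν with hμ₁
  have hdecomp : μ = (1 - b) • μ₁ + (1 - (1 - b)) • ν := by
    ext p
    simp only [hμ₁, Pi.add_apply, Pi.smul_apply, smul_eq_mul]
    field_simp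
    ring
  refine ⟨μ₁, ν, hμ.smul_add_smul hν (by field_simp; ring) fun p => ?_, hν, fun h => hne ?_,
    1 - b, ⟨by linarith [hb.2], by linarith [hb.1]⟩, hdecomp⟩
  · rw [show (1 - b)⁻¹ * μ p + -(b / (1 - b)) * ν p = (1 - b)⁻¹ * (μ p - b * ν p) by ring]
    exact mul_nonneg (inv_nonneg.2 (sub_pos.2 hb.2).le) (sub_nonneg.2 (hle p))
  · rw [hdecomp, h, ← add_smul]; simp

end memM1s

section cycleMeasure

variable [DecidableEq T] {l : ℕ} {γ : Fin (l + 1) → T}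

theorem cycleMeasure_eq_sum (hγ : Function.Injective γ) (p : T × T) :
    cycleMeasure γ p = ∑ m, if (γ m, γ (m + 1)) = p then ((l : ℝ) + 1)⁻¹ else 0 := by
  unfold cycleMeasure
  split_ifs with hp
  · obtain ⟨m, rfl⟩ := hp
    rw [Finset.sum_eq_single m (fun m' _ hm' => if_neg fun h => hm' (hγ (Prod.ext_iff.1 h).1))
      (by simp), if_pos rfl]
  · exact (Finset.sum_eq_zero fun m _ => if_neg fun h => hp ⟨m, h.symm⟩).symm

theorem memM1s_cycleMeasure (hγ : Function.Injective γ) : memM1s (cycleMeasure γ) := by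
  refine ⟨fun p => ?_, ?_, fun i => ?_⟩
  · unfold cycleMeasure; split_ifs <;> positivity
  · simp_rw [cycleMeasure_eq_sum hγ]
    rw [Finset.sum_comm]
    simp [mul_inv_cancel₀ (Nat.cast_add_one_ne_zero l : (l : ℝ) + 1 ≠ 0)]
  · simp_rw [cycleMeasure_eq_sum hγ]
    rw [Finset.sum_comm]
    conv_rhs => rw [Finset.sum_comm]
    simp only [Prod.ext_iff, ite_and, Finset.sum_ite_eq, Finset.sum_ite_irrel, Finset.mem_univ,
      if_true, Finset.sum_const_zero]
    exact (Equiv.sum_comp (Equiv.addRight (1 : Fin (l + 1)))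
      fun m => if γ m = i then ((l : ℝ) + 1)⁻¹ else 0).symm

end cycleMeasure

end

/-- A probability measure with equal marginals that is not a cycle measure is not an
extreme point: it is a proper convex combination of two distinct measures with equal
marginals. -/
theorem stmt6 {T : Type*} [Fintype T] [DecidableEq T]
    (μ : T × T → ℝ) (h : memM1s μ)
    (hnot : ¬ ∃ l : ℕ, ∃ γ : Fin (l + 1) → T,
      Function.Injective γ ∧ μ = cycleMeasure γ) :
    ∃ μ₁ μ₂ : T × T → ℝ, memM1s μ₁ ∧ memM1s μ₂ ∧ μ₁ ≠ μ₂ ∧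
      ∃ a ∈ Set.Ioo (0 : ℝ) 1, μ = a • μ₁ + (1 - a) • μ₂ := by
  obtain ⟨l, γ, hγ, hpos⟩ := h.exists_injective_cycle_pos_s6
  have hne : μ ≠ cycleMeasure γ := fun heq => hnot ⟨l, γ, hγ, heq⟩
  obtain ⟨b, hb, hle⟩ := Finite.exists_mem_Ioo_mul_le (ν := cycleMeasure γ) h.1 fun p hp => by
    obtain ⟨m, rfl⟩ : ∃ m, p = (γ m, γ (m + 1)) := by
      by_contra hp'
      exact hp (if_neg hp')
    exact hpos m
  exact h.exists_convex_decomposition_of_smul_le (memM1s_cycleMeasure hγ) hne hb hle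
end

section
/- Suppose $H:(0,\infty)\to\mathbb{R}$ satisfies $\lim_{t\to\infty}\frac{H(ct)-cH(t)}{t}=\rho\, c\log c$ for every $c\in(0,1)$, where $\rho\in(0,\infty)$, and $H$ is nondecreasing and convex. Then $H(n) = \rho n\log(\rho n) - \rho n + o(n)$ as $n\to\infty$ is NOT implied in general; however, the weaker asymptotics $H(n)/ (n\log n) \to \rho$ as $n\to\infty$ holds. -/
/-!
Write `L t = H t / t`. For `c = 1/2` the hypothesis says `L (2t) - L t → ρ log 2`. In the
variable `x = log t` this is an asymptotically constant increment `ρ log 2` over steps of length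
`log 2`. Monotonicity of `H` makes `L ∘ exp` bounded on every window of that length, so
telescoping over the steps gives `L (exp x) = ρ x + o(x)`, that is `H t / (t log t) → ρ`.
-/

open Filter Topology Set Real

section Additive

variable {g : ℝ → ℝ} {p a ε X : ℝ}

theorem abs_add_nat_mul_sub_sub_le (hp : 0 ≤ p)
    (h : ∀ x ≥ X, |g (x + p) - g x - a| ≤ ε) (n : ℕ) {x : ℝ} (hx : X ≤ x) :
    |g (x + n * p) - g x - n * a| ≤ n * ε := by
  induction n with
  | zero => simp
  | succ n ih =>
    have hstep := h (x + n * p) (by nlinarith [n.cast_nonneg (α := ℝ)])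
    calc |g (x + (n + 1 : ℕ) * p) - g x - (n + 1 : ℕ) * a|
        = |(g (x + n * p + p) - g (x + n * p) - a) + (g (x + n * p) - g x - n * a)| := by
          push_cast; ring_nf
      _ ≤ ε + n * ε := (abs_add_le _ _).trans (add_le_add hstep ih)
      _ = (n + 1 : ℕ) * ε := by push_cast; ring

theorem exists_eq_add_nat_mul_of_le (hp : 0 < p) {x : ℝ} (hx : X ≤ x) :
    ∃ n : ℕ, ∃ y ∈ Ico X (X + p), x = y + n * p := by
  set n := ⌊(x - X) / p⌋₊
  have h₁ : (n : ℝ) ≤ (x - X) / p := Nat.floor_le (div_nonneg (by linarith) hp.le)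
  have h₂ : (x - X) / p < n + 1 := Nat.lt_floor_add_one _
  rw [le_div_iff₀ hp] at h₁
  rw [div_lt_iff₀ hp] at h₂
  exact ⟨n, x - n * p, ⟨by linarith, by linarith⟩, by ring⟩

theorem exists_abs_sub_mul_le_of_tendsto_add_sub (hp : 0 < p)
    (hbdd : ∀ᶠ X in atTop, ∃ M, ∀ x ∈ Icc X (X + p), |g x| ≤ M)
    (h : Tendsto (fun x => g (x + p) - g x) atTop (𝓝 a)) (hε : 0 < ε) :
    ∃ C, ∀ᶠ x in atTop, |g x - a / p * x| ≤ ε * x + C := by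
  have hstep : ∀ᶠ X in atTop, ∀ x ≥ X, |g (x + p) - g x - a| ≤ ε * p :=
    (eventually_forall_ge_atTop.2 <| (Metric.tendsto_nhds.1 h) _ (by positivity)).mono
      fun _ hX x hx => (hX x hx).le
  obtain ⟨X, ⟨M, hM⟩, hX⟩ := (hbdd.and hstep).exists
  refine ⟨M + |a / p| * (|X| + p) + ε * |X|, (eventually_ge_atTop X).mono fun x hx => ?_⟩
  obtain ⟨n, y, hy, rfl⟩ := exists_eq_add_nat_mul_of_le hp hx
  have hgy := hM y (Ico_subset_Icc_self hy)
  have hn := abs_add_nat_mul_sub_sub_le hp.le hX n hy.1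
  have hyX : |y| ≤ |X| + p := by
    rw [abs_le]; constructor <;> cases abs_cases X <;> linarith [hy.1, hy.2]
  have hnp : n * (ε * p) ≤ ε * (y + n * p) + ε * |X| := by
    nlinarith [neg_abs_le X, hy.1]
  have hlin : |a / p * y| ≤ |a / p| * (|X| + p) := by
    rw [abs_mul]; exact mul_le_mul_of_nonneg_left hyX (abs_nonneg _)
  have hsplit : g (y + n * p) - a / p * (y + n * p)
      = (g (y + n * p) - g y - n * a) + g y - a / p * y := by
    field_simp; ring
  rw [hsplit]
  calc |(g (y + n * p) - g y - n * a) + g y - a / p * y|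
      ≤ |g (y + n * p) - g y - n * a| + |g y| + |a / p * y| :=
        (abs_sub _ _).trans (add_le_add_left (abs_add_le _ _) _)
    _ ≤ _ := by linarith

theorem tendsto_div_of_forall_abs_sub_mul_le {f : ℝ → ℝ} {k : ℝ}
    (h : ∀ ε > 0, ∃ C, ∀ᶠ x in atTop, |f x - k * x| ≤ ε * x + C) :
    Tendsto (fun x => f x / x) atTop (𝓝 k) := by
  have hlo : (fun x => f x - k * x) =o[atTop] id := by
    refine Asymptotics.isLittleO_iff.2 fun ε hε => ?_
    obtain ⟨C, hC⟩ := h (ε / 2) (half_pos hε)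
    filter_upwards [hC, eventually_ge_atTop (2 * C / ε), eventually_ge_atTop 0]
      with x hx hxC hx0
    rw [Real.norm_eq_abs, id, Real.norm_of_nonneg hx0]
    rw [div_le_iff₀ hε] at hxC
    linarith
  have := hlo.tendsto_div_nhds_zero.const_add k
  rw [add_zero] at this
  refine this.congr' ((eventually_ne_atTop 0).mono fun x hx => ?_)
  simp only [id]
  field_simp
  ring

theorem tendsto_div_of_tendsto_add_sub (hp : 0 < p)
    (hbdd : ∀ᶠ X in atTop, ∃ M, ∀ x ∈ Icc X (X + p), |g x| ≤ M)
    (h : Tendsto (fun x => g (x + p) - g x) atTop (𝓝 a)) :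
    Tendsto (fun x => g x / x) atTop (𝓝 (a / p)) :=
  tendsto_div_of_forall_abs_sub_mul_le fun _ hε =>
    exists_abs_sub_mul_le_of_tendsto_add_sub hp hbdd h hε

end Additive

theorem abs_div_le_of_monotoneOn {H : ℝ → ℝ} (hmono : MonotoneOn H (Ioi 0)) {u t v : ℝ}
    (hu : 0 < u) (hut : u ≤ t) (htv : t ≤ v) : |H t / t| ≤ (|H u| + |H v|) / u := by
  have ht : 0 < t := hu.trans_le hut
  have hHu := hmono hu ht hut
  have hHv := hmono ht (ht.trans_le htv) htv
  rw [abs_div, abs_of_pos ht]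
  calc |H t| / t ≤ (|H u| + |H v|) / t := by
        gcongr
        rw [abs_le]
        constructor <;> linarith [neg_abs_le (H u), le_abs_self (H v), abs_nonneg (H u),
          abs_nonneg (H v)]
    _ ≤ (|H u| + |H v|) / u := by gcongr

theorem tendsto_div_sub_div_of_tendsto_sub_mul {H : ℝ → ℝ} {c ρ : ℝ} (hc : 0 < c)
    (h : Tendsto (fun t => (H (c * t) - c * H t) / t) atTop (𝓝 (ρ * (c * log c)))) :
    Tendsto (fun t => H (c⁻¹ * t) / (c⁻¹ * t) - H t / t) atTop (𝓝 (ρ * log c⁻¹)) := by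
  have := (h.comp (tendsto_id.const_mul_atTop (inv_pos.2 hc))).const_mul (-c⁻¹)
  rw [log_inv]
  convert this using 1
  · funext t
    simp only [Function.comp, id]
    rw [mul_inv_cancel_left₀ hc.ne']
    field_simp
    ring
  · field_simp

theorem tendsto_div_mul_log_of_tendsto_div_sub_div {H : ℝ → ℝ} {b ρ : ℝ} (hb : 1 < b)
    (hmono : MonotoneOn H (Ioi 0))
    (h : Tendsto (fun t => H (b * t) / (b * t) - H t / t) atTop (𝓝 (ρ * log b))) :
    Tendsto (fun t => H t / (t * log t)) atTop (𝓝 ρ) := by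
  have hlogb : 0 < log b := log_pos hb
  have hbdd : ∀ X, ∃ M, ∀ x ∈ Icc X (X + log b), |H (exp x) / exp x| ≤ M := fun X =>
    ⟨_, fun x hx => abs_div_le_of_monotoneOn hmono (exp_pos X) (exp_le_exp.2 hx.1)
      (exp_le_exp.2 hx.2)⟩
  have hstep : Tendsto (fun x => H (exp (x + log b)) / exp (x + log b) - H (exp x) / exp x)
      atTop (𝓝 (ρ * log b)) := by
    simpa only [Function.comp_def, exp_add, exp_log (zero_lt_one.trans hb), mul_comm _ b]
      using h.comp tendsto_exp_atTop
  have := (tendsto_div_of_tendsto_add_sub hlogb (Eventually.of_forall hbdd) hstep).comp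
    tendsto_log_atTop
  rw [mul_div_cancel_right₀ _ hlogb.ne'] at this
  refine this.congr' ((eventually_gt_atTop 0).mono fun t ht => ?_)
  simp only [Function.comp, exp_log ht, div_div]

open Filter in
theorem stmt12_general (H : ℝ → ℝ) (ρ : ℝ)
    (hmono : MonotoneOn H (Set.Ioi (0 : ℝ)))
    (hlim : ∀ c ∈ Set.Ioo (0 : ℝ) 1,
      Tendsto (fun t : ℝ => (H (c * t) - c * H t) / t) atTop
        (nhds (ρ * (c * Real.log c)))) :
    Tendsto (fun n : ℕ => H n / (n * Real.log n)) atTop (nhds ρ) := by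
  have hdouble := tendsto_div_sub_div_of_tendsto_sub_mul (by norm_num)
    (hlim 2⁻¹ ⟨by norm_num, by norm_num⟩)
  rw [inv_inv] at hdouble
  exact (tendsto_div_mul_log_of_tendsto_div_sub_div one_lt_two hmono hdouble).comp
    tendsto_natCast_atTop_atTop

open Filter in
/-- If the (convex, nondecreasing) logarithmic moment generating function `H` satisfies
`(H(ct) - c H(t))/t → ρ c log c` as `t → ∞` for every `c ∈ (0,1)`, then
`H(n)/(n log n) → ρ` as `n → ∞`. -/
theorem stmt12 (H : ℝ → ℝ) (ρ : ℝ) (hρ : 0 < ρ)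
    (hconv : ConvexOn ℝ (Set.Ioi (0 : ℝ)) H)
    (hmono : MonotoneOn H (Set.Ioi (0 : ℝ)))
    (hlim : ∀ c ∈ Set.Ioo (0 : ℝ) 1,
      Tendsto (fun t : ℝ => (H (c * t) - c * H t) / t) atTop
        (nhds (ρ * (c * Real.log c)))) :
    Tendsto (fun n : ℕ => H n / (n * Real.log n)) atTop (nhds ρ) :=
  stmt12_general H ρ hmono hlim
end

section
/- Let $A=(a_{ij})_{i,j\in\mathcal{T}}$ be a matrix with strictly positive entries on a finite set $\mathcal{T}$. Then for every $i$, $\lim_{k\to\infty}\frac{1}{k}\log\sum_j (A^k)_{ij}$ exists, is independent of $i$, and equals $\sup_{\nu\in\mathcal{M}_1^{s}(\mathcal{T}^2)}\big(\sum_{i,j}\nu(i,j)\log a_{ij} - \sum_{i,j}\nu(i,j)\log\frac{\nu(i,j)}{\overline{\nu}(i)}\big)$, where $\overline{\nu}(i)=\sum_j\nu(i,j)$. -/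
open Finset Filter Topology Real Matrix

theorem tendsto_log_div_of_mul_pow_le_of_le_mul_pow {S : ℕ → ℝ} {a b ρ : ℝ} (ha : 0 < a)
    (hρ : 0 < ρ) (hlow : ∀ k, a * ρ ^ k ≤ S k) (hup : ∀ k, S k ≤ b * ρ ^ k) :
    Tendsto (fun k : ℕ => log (S k) / k) atTop (𝓝 (log ρ)) := by
  have hb : 0 < b := pos_of_mul_pos_left ((mul_pos ha (pow_pos hρ 0)).trans_le
    ((hlow 0).trans (hup 0))) (pow_pos hρ 0).le
  have hlog : ∀ c, 0 < c → ∀ k : ℕ, 1 ≤ k → log (c * ρ ^ k) / k = log c / k + log ρ := by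
    intro c hc k hk
    have hk0 : (k : ℝ) ≠ 0 := by positivity
    rw [log_mul hc.ne' (pow_pos hρ k).ne', log_pow]
    field_simp
  have hlim : ∀ c, Tendsto (fun k : ℕ => log c / k + log ρ) atTop (𝓝 (log ρ)) := fun c => by
    simpa using (tendsto_const_div_atTop_nhds_zero_nat (log c)).add_const (log ρ)
  refine tendsto_of_tendsto_of_tendsto_of_le_of_le' (hlim a) (hlim b) ?_ ?_ <;>
    filter_upwards [eventually_ge_atTop 1] with k hk
  · rw [← hlog a ha k hk]
    gcongr
    exact hlow k
  · rw [← hlog b hb k hk]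
    gcongr
    · exact (mul_pos ha (pow_pos hρ k)).trans_le (hlow k)
    · exact hup k

theorem sub_le_mul_log_div {x y : ℝ} (hx : 0 ≤ x) (hy : 0 ≤ y) (hxy : 0 < x → 0 < y) :
    x - y ≤ x * log (x / y) := by
  rcases hx.eq_or_lt with rfl | hx
  · simpa using hy
  have h := one_sub_inv_le_log_of_pos (div_pos hx (hxy hx))
  rw [inv_div] at h
  calc x - y = x * (1 - y / x) := by field_simp
    _ ≤ x * log (x / y) := mul_le_mul_of_nonneg_left h hx.le

namespace Matrix

variable {ι : Type*} [Fintype ι] {A : Matrix ι ι ℝ}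

theorem dotProduct_pos_of_pos [Nonempty ι] {l r : ι → ℝ}
    (hl : ∀ i, 0 < l i) (hr : ∀ i, 0 < r i) : 0 < l ⬝ᵥ r :=
  sum_pos (fun i _ => mul_pos (hl i) (hr i)) univ_nonempty

theorem eq_of_mulVec_eq_smul_of_vecMul_eq_smul {ρ σ : ℝ} {l r : ι → ℝ} (hr : A *ᵥ r = ρ • r)
    (hl : l ᵥ* A = σ • l) (hlr : l ⬝ᵥ r ≠ 0) : σ = ρ := by
  have h := dotProduct_mulVec l A r
  rw [hr, hl, dotProduct_smul, smul_dotProduct, smul_eq_mul, smul_eq_mul] at h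
  exact mul_right_cancel₀ hlr h.symm

theorem ne_zero_of_mem_stdSimplex {v : ι → ℝ} (hv : v ∈ stdSimplex ℝ ι) : v ≠ 0 := by
  rintro rfl
  simp [stdSimplex] at hv

theorem mulVec_apply_pos (hA : ∀ i j, 0 < A i j) {v : ι → ℝ} (hv : 0 ≤ v) (hv0 : v ≠ 0)
    (i : ι) : 0 < (A *ᵥ v) i := by
  obtain ⟨j, hj⟩ := Function.ne_iff.1 hv0
  exact sum_pos' (fun k _ => mul_nonneg (hA i k).le (hv k))
    ⟨j, mem_univ j, mul_pos (hA i j) ((hv j).lt_of_ne' hj)⟩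

/-- The maximal `t` over this set is the Perron root (Collatz–Wielandt). -/
def collatzWielandtSet (A : Matrix ι ι ℝ) : Set ((ι → ℝ) × ℝ) :=
  {p | p.1 ∈ stdSimplex ℝ ι ∧ 0 ≤ p.2 ∧ p.2 • p.1 ≤ A *ᵥ p.1}

theorem isCompact_collatzWielandtSet (hA : ∀ i j, 0 ≤ A i j) :
    IsCompact (collatzWielandtSet A) := by
  have hclosed : IsClosed (collatzWielandtSet A) :=
    ((isClosed_stdSimplex ℝ ι).preimage continuous_fst).inter
      ((isClosed_le continuous_const continuous_snd).inter
        (isClosed_le (by fun_prop) (continuous_const.matrix_mulVec continuous_fst)))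
  refine ((isCompact_stdSimplex ℝ ι).prod (isCompact_Icc (a := 0) (b := ∑ i, ∑ j, A i j)))
    |>.of_isClosed_subset hclosed ?_
  rintro ⟨v, t⟩ ⟨hv, ht, hle⟩
  refine ⟨hv, ht, ?_⟩
  calc t = ∑ i, t * v i := by rw [← mul_sum, hv.2, mul_one]
    _ ≤ ∑ i, ∑ j, A i j * v j := sum_le_sum fun i _ => hle i
    _ ≤ ∑ i, ∑ j, A i j := by
      gcongr with i _ j _
      exact mul_le_of_le_one_right (hA i j) (mem_Icc_of_mem_stdSimplex hv j).2

theorem mulVec_eq_smul_of_isMaxOn (hA : ∀ i j, 0 < A i j) {v : ι → ℝ} {ρ : ℝ}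
    (hmem : (v, ρ) ∈ collatzWielandtSet A) (hmax : IsMaxOn Prod.snd (collatzWielandtSet A) (v, ρ)) :
    A *ᵥ v = ρ • v := by
  obtain ⟨hv, hρ, hle⟩ := hmem
  -- otherwise `w = A v` satisfies `ρ w < A w` strictly, so some `t > ρ` is admissible at `w`
  by_contra hne
  set w := A *ᵥ v
  have hv0 := ne_zero_of_mem_stdSimplex hv
  obtain ⟨i₀, -⟩ := Function.ne_iff.1 hv0
  have hw : ∀ i, 0 < w i := mulVec_apply_pos hA hv.1 hv0
  have hgap (i : ι) : ρ * w i < (A *ᵥ w) i := by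
    have := mulVec_apply_pos hA (sub_nonneg.2 hle) (sub_ne_zero.2 hne) i
    rwa [mulVec_sub, mulVec_smul, Pi.sub_apply, Pi.smul_apply, smul_eq_mul, sub_pos] at this
  obtain ⟨t, hwt, hρt⟩ : ∃ t, (∀ i, t * w i < (A *ᵥ w) i) ∧ ρ < t :=
    (((eventually_all.2 fun i => (continuous_id.mul continuous_const).continuousAt.eventually_lt
      continuousAt_const (hgap i)).filter_mono nhdsWithin_le_nhds).and
        (self_mem_nhdsWithin (s := Set.Ioi ρ))).exists
  have hs : 0 < ∑ i, w i := sum_pos (fun i _ => hw i) ⟨i₀, mem_univ i₀⟩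
  have hnext : ((∑ i, w i)⁻¹ • w, t) ∈ collatzWielandtSet A := by
    refine ⟨⟨fun i => smul_nonneg (inv_nonneg.2 hs.le) (hw i).le, ?_⟩, hρ.trans hρt.le,
      fun i => ?_⟩
    · simp only [Pi.smul_apply, smul_eq_mul, ← mul_sum]
      exact inv_mul_cancel₀ hs.ne'
    · simp only [mulVec_smul, Pi.smul_apply, smul_eq_mul, mul_left_comm t]
      exact mul_le_mul_of_nonneg_left (hwt i).le (inv_nonneg.2 hs.le)
  exact (hmax hnext).not_gt hρt

theorem exists_pos_eigenvector_of_pos [Nonempty ι] (hA : ∀ i j, 0 < A i j) :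
    ∃ ρ : ℝ, 0 < ρ ∧ ∃ r : ι → ℝ, (∀ i, 0 < r i) ∧ A *ᵥ r = ρ • r := by
  have hzero : ((fun _ => (Fintype.card ι : ℝ)⁻¹, 0) : (ι → ℝ) × ℝ) ∈
      collatzWielandtSet A := by
    refine ⟨⟨fun _ => by positivity, by simp⟩, le_rfl, fun i => ?_⟩
    simpa [mulVec, dotProduct] using
      sum_nonneg fun j _ => mul_nonneg (hA i j).le (by positivity)
  obtain ⟨⟨v, ρ⟩, hmem, hmax⟩ :=
    (isCompact_collatzWielandtSet fun i j => (hA i j).le).exists_isMaxOn ⟨_, hzero⟩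
      continuous_snd.continuousOn
  have heig := mulVec_eq_smul_of_isMaxOn hA hmem hmax
  have hρv (i : ι) : 0 < ρ * v i := by
    simpa [heig] using mulVec_apply_pos hA hmem.1.1 (ne_zero_of_mem_stdSimplex hmem.1) i
  exact ⟨ρ, pos_of_mul_pos_left (hρv (Classical.arbitrary ι)) (hmem.1.1 _), v,
    fun i => pos_of_mul_pos_right (hρv i) hmem.2.1, heig⟩

theorem pow_mulVec_of_mulVec_eq_smul [DecidableEq ι] {ρ : ℝ} {r : ι → ℝ}
    (h : A *ᵥ r = ρ • r) (k : ℕ) : (A ^ k) *ᵥ r = ρ ^ k • r := by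
  induction k with
  | zero => simp
  | succ k ih => rw [pow_succ, ← mulVec_mulVec, h, mulVec_smul, ih, smul_smul, pow_succ']

theorem tendsto_log_sum_pow_apply_div [DecidableEq ι] (hA : ∀ i j, 0 ≤ A i j) {ρ : ℝ}
    (hρ : 0 < ρ) {r : ι → ℝ} (hr : ∀ i, 0 < r i) (h : A *ᵥ r = ρ • r) (i : ι) :
    Tendsto (fun k : ℕ => log (∑ j, (A ^ k) i j) / k) atTop (𝓝 (log ρ)) := by
  have : Nonempty ι := ⟨i⟩
  obtain ⟨m, hm⟩ := Finite.exists_min r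
  obtain ⟨M, hM⟩ := Finite.exists_max r
  have hpow (k : ℕ) : ∑ j, (A ^ k) i j * r j = ρ ^ k * r i :=
    congrFun (pow_mulVec_of_mulVec_eq_smul h k) i
  refine tendsto_log_div_of_mul_pow_le_of_le_mul_pow (a := r i / r M) (b := r i / r m)
    (div_pos (hr i) (hr M)) hρ (fun k => ?_) (fun k => ?_)
  · rw [div_mul_eq_mul_div, div_le_iff₀ (hr M), mul_comm, ← hpow, sum_mul]
    exact sum_le_sum fun j _ => mul_le_mul_of_nonneg_left (hM j) (pow_apply_nonneg hA k i j)
  · rw [div_mul_eq_mul_div, le_div_iff₀ (hr m), mul_comm (r i), ← hpow, sum_mul]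
    exact sum_le_sum fun j _ => mul_le_mul_of_nonneg_left (hm j) (pow_apply_nonneg hA k i j)

end Matrix

section Variational

variable {T : Type*}

noncomputable def doobTransform (A : Matrix T T ℝ) (ρ : ℝ) (r : T → ℝ) : Matrix T T ℝ :=
  of fun i j => A i j * r j / (ρ * r i)

variable {A : Matrix T T ℝ} {ρ : ℝ} {l r : T → ℝ}

theorem doobTransform_pos (hA : ∀ i j, 0 < A i j) (hρ : 0 < ρ) (hr : ∀ i, 0 < r i) (i j : T) :
    0 < doobTransform A ρ r i j :=
  div_pos (mul_pos (hA i j) (hr j)) (mul_pos hρ (hr i))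

theorem log_eq_log_doobTransform (hA : ∀ i j, 0 < A i j) (hρ : 0 < ρ) (hr : ∀ i, 0 < r i)
    (i j : T) : log (A i j) = log ρ + log (r i) - log (r j) + log (doobTransform A ρ r i j) := by
  rw [doobTransform, of_apply, log_div (mul_pos (hA i j) (hr j)).ne' (mul_pos hρ (hr i)).ne',
    log_mul (hA i j).ne' (hr j).ne', log_mul hρ.ne' (hr i).ne']
  ring

variable [Fintype T]

theorem sum_doobTransform (h : A *ᵥ r = ρ • r) (hρ : ρ ≠ 0) {i : T} (hr : r i ≠ 0) :
    ∑ j, doobTransform A ρ r i j = 1 := by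
  have hi : ∑ j, A i j * r j = ρ * r i := congrFun h i
  simp only [doobTransform, of_apply, ← sum_div, hi]
  exact div_self (mul_ne_zero hρ hr)

theorem sum_mul_fst_eq_sum_mul_snd {ν : T × T → ℝ}
    (hν : ∀ i, ∑ j, ν (i, j) = ∑ j, ν (j, i)) (g : T → ℝ) :
    ∑ p, ν p * g p.1 = ∑ p, ν p * g p.2 := by
  rw [Fintype.sum_prod_type, Fintype.sum_prod_type, sum_comm (f := fun a b => ν (a, b) * g b)]
  simp_rw [← sum_mul, hν]

noncomputable def pressureFunctional (A : Matrix T T ℝ) (ν : T × T → ℝ) : ℝ :=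
  ∑ p : T × T, ν p * log (A p.1 p.2) - ∑ p : T × T, ν p * log (ν p / ∑ k : T, ν (p.1, k))

theorem pressureFunctional_eq (hA : ∀ i j, 0 < A i j) (hρ : 0 < ρ) (hr : ∀ i, 0 < r i)
    {ν : T × T → ℝ} (hν : memM1s ν) :
    pressureFunctional A ν = log ρ -
      ∑ p, ν p * log (ν p / ((∑ k, ν (p.1, k)) * doobTransform A ρ r p.1 p.2)) := by
  obtain ⟨hν0, hν1, hνm⟩ := hν
  have hterm (p : T × T) : ν p * log (A p.1 p.2) - ν p * log (ν p / ∑ k, ν (p.1, k)) =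
      ν p * log ρ + (ν p * log (r p.1) - ν p * log (r p.2)) -
        ν p * log (ν p / ((∑ k, ν (p.1, k)) * doobTransform A ρ r p.1 p.2)) := by
    rcases (hν0 p).eq_or_lt with h0 | hpos
    · simp [← h0]
    have hbar : 0 < ∑ k, ν (p.1, k) :=
      hpos.trans_le (single_le_sum (fun k _ => hν0 (p.1, k)) (mem_univ p.2))
    have hP := doobTransform_pos hA hρ hr p.1 p.2
    rw [log_eq_log_doobTransform hA hρ hr, log_div hpos.ne' (mul_pos hbar hP).ne',
      log_div hpos.ne' hbar.ne', log_mul hbar.ne' hP.ne']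
    ring
  rw [pressureFunctional, ← sum_sub_distrib, sum_congr rfl fun p _ => hterm p, sum_sub_distrib,
    sum_add_distrib, sum_sub_distrib, ← sum_mul, hν1,
    sum_mul_fst_eq_sum_mul_snd hνm fun i => log (r i), sub_self]
  ring

theorem pressureFunctional_le (hA : ∀ i j, 0 < A i j) (hρ : 0 < ρ) (hr : ∀ i, 0 < r i)
    (h : A *ᵥ r = ρ • r) {ν : T × T → ℝ} (hν : memM1s ν) : pressureFunctional A ν ≤ log ρ := by
  set q : T × T → ℝ := fun p => (∑ k, ν (p.1, k)) * doobTransform A ρ r p.1 p.2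
  have hq1 : ∑ p, q p = 1 := by
    simp only [q, Fintype.sum_prod_type, ← mul_sum, sum_doobTransform h hρ.ne' (hr _).ne',
      mul_one]
    rw [← Fintype.sum_prod_type, hν.2.1]
  have hgibbs : ∑ p, (ν p - q p) ≤ ∑ p, ν p * log (ν p / q p) := by
    refine sum_le_sum fun p _ => sub_le_mul_log_div (hν.1 p)
      (mul_nonneg (sum_nonneg fun k _ => hν.1 _) (doobTransform_pos hA hρ hr _ _).le)
      fun hpos => mul_pos (hpos.trans_le ?_) (doobTransform_pos hA hρ hr _ _)
    exact single_le_sum (fun k _ => hν.1 (p.1, k)) (mem_univ p.2)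
  rw [sum_sub_distrib, hν.2.1, hq1, sub_self] at hgibbs
  rw [pressureFunctional_eq hA hρ hr hν]
  linarith

/-- For a `0-1` matrix this is the Parry measure; in general it is the stationary pair law
`π ⊗ P` of the Doob transform `P`, with `π i ∝ l i * r i`. -/
noncomputable def parryMeasure (A : Matrix T T ℝ) (ρ : ℝ) (l r : T → ℝ) : T × T → ℝ :=
  fun p => l p.1 * A p.1 p.2 * r p.2 / (ρ * (l ⬝ᵥ r))

theorem sum_parryMeasure_fst (h : A *ᵥ r = ρ • r) (hρ : ρ ≠ 0) (i : T) :
    ∑ j, parryMeasure A ρ l r (i, j) = l i * r i / (l ⬝ᵥ r) := by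
  have hi : ∑ j, A i j * r j = ρ * r i := congrFun h i
  simp only [parryMeasure, ← sum_div, mul_assoc, ← mul_sum, hi]
  field_simp

theorem sum_parryMeasure_snd (h : l ᵥ* A = ρ • l) (hρ : ρ ≠ 0) (j : T) :
    ∑ i, parryMeasure A ρ l r (i, j) = l j * r j / (l ⬝ᵥ r) := by
  have hj : ∑ i, l i * A i j = ρ * l j := congrFun h j
  simp only [parryMeasure, ← sum_div, ← sum_mul, hj]
  field_simp

variable (hA : ∀ i j, 0 < A i j) (hρ : 0 < ρ) (hl : ∀ i, 0 < l i) (hr : ∀ i, 0 < r i)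
  (hright : A *ᵥ r = ρ • r) (hleft : l ᵥ* A = ρ • l)
include hA hρ hl hr

theorem parryMeasure_pos (p : T × T) : 0 < parryMeasure A ρ l r p := by
  have : Nonempty T := ⟨p.1⟩
  have := hA p.1 p.2; have := hl p.1; have := hr p.2; have := dotProduct_pos_of_pos hl hr
  unfold parryMeasure; positivity

include hright hleft

theorem memM1s_parryMeasure [Nonempty T] : memM1s (parryMeasure A ρ l r) := by
  refine ⟨fun p => (parryMeasure_pos hA hρ hl hr p).le, ?_, fun i => ?_⟩
  · rw [Fintype.sum_prod_type]
    simp only [sum_parryMeasure_fst hright hρ.ne', ← sum_div]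
    exact div_self (dotProduct_pos_of_pos hl hr).ne'
  · rw [sum_parryMeasure_fst hright hρ.ne', sum_parryMeasure_snd hleft hρ.ne']

theorem pressureFunctional_parryMeasure [Nonempty T] :
    pressureFunctional A (parryMeasure A ρ l r) = log ρ := by
  rw [pressureFunctional_eq hA hρ hr (memM1s_parryMeasure hA hρ hl hr hright hleft)]
  have hq (p : T × T) : (∑ k, parryMeasure A ρ l r (p.1, k)) * doobTransform A ρ r p.1 p.2 =
      parryMeasure A ρ l r p := by
    have := (hr p.1).ne'
    rw [sum_parryMeasure_fst hright hρ.ne', doobTransform, of_apply, parryMeasure]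
    field_simp
  simp [hq, div_self (parryMeasure_pos hA hρ hl hr _).ne']

theorem isGreatest_pressureFunctional [Nonempty T] :
    IsGreatest (pressureFunctional A '' {ν | memM1s ν}) (log ρ) :=
  ⟨⟨_, memM1s_parryMeasure hA hρ hl hr hright hleft,
      pressureFunctional_parryMeasure hA hρ hl hr hright hleft⟩,
    by rintro _ ⟨ν, hν, rfl⟩; exact pressureFunctional_le hA hρ hr hright hν⟩

end Variational

open Filter in
/-- For a matrix `A` with strictly positive entries, the limit
`μ(A) = lim_k (1/k) log ∑_j (Aᵏ)_{ij}` exists, does not depend on `i`, and equals the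
variational formula
`sup_{ν ∈ M₁ˢ(T²)} ( ∑_{i,j} ν(i,j) log a_{ij} - ∑_{i,j} ν(i,j) log(ν(i,j)/ν̄(i)) )`. -/
theorem stmt19 {T : Type*} [Fintype T] [DecidableEq T] [Nonempty T]
    (A : Matrix T T ℝ) (hA : ∀ i j, 0 < A i j) :
    ∃ L : ℝ,
      (∀ i : T, Tendsto (fun k : ℕ => Real.log (∑ j : T, (A ^ k) i j) / k)
        atTop (nhds L)) ∧
      IsLUB ((fun ν : T × T → ℝ =>
          ∑ p : T × T, ν p * Real.log (A p.1 p.2) -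
            ∑ p : T × T, ν p * Real.log (ν p / ∑ k : T, ν (p.1, k))) ''
        {ν : T × T → ℝ | memM1s ν}) L := by
  obtain ⟨ρ, hρ, r, hr, hright⟩ := exists_pos_eigenvector_of_pos hA
  obtain ⟨σ, -, l, hl, hleft⟩ := exists_pos_eigenvector_of_pos (A := Aᵀ) fun i j => hA j i
  rw [mulVec_transpose] at hleft
  obtain rfl : σ = ρ :=
    eq_of_mulVec_eq_smul_of_vecMul_eq_smul hright hleft (dotProduct_pos_of_pos hl hr).ne'
  exact ⟨log σ, tendsto_log_sum_pow_apply_div (fun i j => (hA i j).le) hρ hr hright,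
    (isGreatest_pressureFunctional hA hρ hl hr hright hleft).isLUB⟩
end
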